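/- If a permutation passes through a pop stack whose full-pop moments are given by a division π = π₁|π₂|⋯|π_t, then the resulting queue content is π₁ʳ π₂ʳ ⋯ π_tʳ (each block reversed), and this concatenation avoids 231 if and only if the divided permutation π₁|⋯|π_t avoids the divided patterns 132, 2|13, 32|1, and 2|3|1. -/

import Mathlib

/-- `u` and `v` have the same length and are order isomorphic (same relative order of entries). -/
def OrderIsoList (u v : List ℕ) : Prop :=
  u.length = v.length ∧ ∀ i j, i < u.length → j < u.length →
    (u.getD i 0 < u.getD j 0 ↔ v.getD i 0 < v.getD j 0)

/-- `p` contains the pattern `q`: some subsequence of `p` is order isomorphic to `q`. -/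
def ContainsPat (p q : List ℕ) : Prop := ∃ s : List ℕ, s.Sublist p ∧ OrderIsoList s q

def AvoidsPat (p q : List ℕ) : Prop := ¬ ContainsPat p q

/-- `p` is a permutation of the values `1, …, p.length`. -/
def IsPermList (p : List ℕ) : Prop := p.Perm (List.range' 1 p.length)

/-- One step of the PQS machine.  State: (input, pop stack, queue, stack, output);
the pop stack and stack have their top at the head, the queue has its front at the
head, output is appended at the end.  The pop stack can only be emptied wholesale
into the queue. -/
inductive PQSStep :
    (List ℕ × List ℕ × List ℕ × List ℕ × List ℕ) →
    (List ℕ × List ℕ × List ℕ × List ℕ × List ℕ) → Prop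
  | input (x : ℕ) (inp ps q st out : List ℕ) :
      PQSStep (x :: inp, ps, q, st, out) (inp, x :: ps, q, st, out)
  | pop (inp ps q st out : List ℕ) (h : ps ≠ []) :
      PQSStep (inp, ps, q, st, out) (inp, [], q ++ ps, st, out)
  | deq (inp ps : List ℕ) (x : ℕ) (q st out : List ℕ) :
      PQSStep (inp, ps, x :: q, st, out) (inp, ps, q, x :: st, out)
  | output (inp ps q : List ℕ) (x : ℕ) (st out : List ℕ) :
      PQSStep (inp, ps, q, x :: st, out) (inp, ps, q, st, out ++ [x])

/-- `p` can be sorted by a pop stack, followed by a queue, followed by a stack. -/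
def PQSSortable (p : List ℕ) : Prop :=
  Relation.ReflTransGen PQSStep (p, [], [], [], []) ([], [], [], [], List.range' 1 p.length)

/-- `bs` is a division of `p`: a partition of `p` into consecutive nonempty blocks. -/
def IsDivision (p : List ℕ) (bs : List (List ℕ)) : Prop :=
  bs.flatten = p ∧ ∀ b ∈ bs, b ≠ []

/-- The divided permutation `bs` contains the divided pattern `qs`: one can pick, for each
block of `qs`, a subsequence of a block of `bs` (distinct blocks of `qs` going to distinct
blocks of `bs`, in order) so that the concatenation of the picked subsequences is order
isomorphic to the concatenation of the blocks of `qs`. -/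
def DividedContains (bs qs : List (List ℕ)) : Prop :=
  ∃ g : Fin qs.length → Fin bs.length, StrictMono g ∧
    ∃ ch : Fin qs.length → List ℕ,
      (∀ i, (ch i).Sublist (bs.get (g i))) ∧
      (∀ i, (ch i).length = (qs.get i).length) ∧
      OrderIsoList (List.ofFn ch).flatten qs.flatten

/-!
Pushing a block onto the pop stack and popping it appends the reversed block to the queue,
so the queue ends up holding `π₁ʳ ⋯ π_tʳ`. An occurrence of `231` in that word distributes its
three entries over the reversed blocks as `3`, `1 + 2`, `2 + 1` or `1 + 1 + 1`; reversing the
pieces back inside their blocks turns these into occurrences of the divided patterns `132`,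
`2|13`, `32|1` and `2|3|1` in `π₁|⋯|π_t`, and conversely.
-/

open List Relation

namespace PQSStep

theorem reflTransGen_input_append (b inp ps q st out : List ℕ) :
    ReflTransGen PQSStep (b ++ inp, ps, q, st, out) (inp, b.reverse ++ ps, q, st, out) := by
  induction b generalizing ps with
  | nil => exact .refl
  | cons x b ih =>
    refine .head (input x (b ++ inp) ps q st out) ?_
    simpa using ih (x :: ps)

theorem reflTransGen_block (b inp q st out : List ℕ) :
    ReflTransGen PQSStep (b ++ inp, [], q, st, out) (inp, [], q ++ b.reverse, st, out) := by
  rcases eq_or_ne b [] with rfl | hb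
  · simpa using .refl
  have hpush := reflTransGen_input_append b inp [] q st out
  rw [append_nil] at hpush
  exact hpush.tail (pop inp b.reverse q st out (by simpa using hb))

theorem reflTransGen_flatten (bs : List (List ℕ)) (q st out : List ℕ) :
    ReflTransGen PQSStep (bs.flatten, [], q, st, out)
      ([], [], q ++ (bs.map reverse).flatten, st, out) := by
  induction bs generalizing q with
  | nil => simpa using .refl
  | cons b bs ih =>
    simpa using (reflTransGen_block b bs.flatten q st out).trans (ih (q ++ b.reverse))

end PQSStep

namespace List

variable {α : Type*} {cs : List (List α)} {x y z : α}

theorem sublist_flatten_iff_sublistForall₂ {s : List α} {L : List (List α)} :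
    s <+ L.flatten ↔ ∃ cs, SublistForall₂ Sublist cs L ∧ (∀ c ∈ cs, c ≠ []) ∧ cs.flatten = s := by
  constructor
  · induction L generalizing s with
    | nil => intro hs; exact ⟨[], .nil, by simp, by simpa using hs⟩
    | cons b L ih =>
      rw [flatten_cons, sublist_append_iff]
      rintro ⟨s₁, s₂, rfl, hs₁, hs₂⟩
      obtain ⟨cs, hcs, hne, rfl⟩ := ih hs₂
      rcases eq_or_ne s₁ [] with rfl | hs₁ne
      · exact ⟨cs, hcs.cons_right, hne, rfl⟩
      · exact ⟨s₁ :: cs, hcs.cons hs₁, by simpa [hs₁ne] using hne, rfl⟩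
  · rintro ⟨cs, hcs, -, rfl⟩
    induction hcs with
    | nil => exact nil_sublist _
    | cons h _ ih => exact h.append ih
    | cons_right _ ih => exact ih.trans (sublist_append_right _ _)

theorem eq_nil_of_flatten_eq_nil (hne : ∀ c ∈ cs, c ≠ []) (h : cs.flatten = []) : cs = [] :=
  eq_nil_iff_forall_not_mem.2 fun c hc => hne c hc (flatten_eq_nil_iff.1 h c hc)

theorem eq_of_flatten_eq_singleton (hne : ∀ c ∈ cs, c ≠ []) (h : cs.flatten = [x]) :
    cs = [[x]] := by
  rcases cs with _ | ⟨_ | ⟨a, _ | ⟨b, t⟩⟩, cs⟩ <;> simp_all [eq_nil_of_flatten_eq_nil]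

theorem eq_of_flatten_eq_pair (hne : ∀ c ∈ cs, c ≠ []) (h : cs.flatten = [x, y]) :
    cs = [[x, y]] ∨ cs = [[x], [y]] := by
  rcases cs with _ | ⟨_ | ⟨a, _ | ⟨b, _ | ⟨c, t⟩⟩⟩, cs⟩ <;>
    simp_all [eq_nil_of_flatten_eq_nil, eq_of_flatten_eq_singleton]

theorem eq_of_flatten_eq_triple (hne : ∀ c ∈ cs, c ≠ []) (h : cs.flatten = [x, y, z]) :
    cs = [[x, y, z]] ∨ cs = [[x], [y, z]] ∨ cs = [[x, y], [z]] ∨ cs = [[x], [y], [z]] := by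
  rcases cs with _ | ⟨_ | ⟨a, _ | ⟨b, _ | ⟨c, _ | ⟨d, t⟩⟩⟩⟩, cs⟩ <;>
    simp_all [eq_nil_of_flatten_eq_nil, eq_of_flatten_eq_singleton, eq_of_flatten_eq_pair]

theorem triple_sublist_flatten_iff {L : List (List α)} :
    [x, y, z] <+ L.flatten ↔
      SublistForall₂ Sublist [[x, y, z]] L ∨ SublistForall₂ Sublist [[x], [y, z]] L ∨
        SublistForall₂ Sublist [[x, y], [z]] L ∨ SublistForall₂ Sublist [[x], [y], [z]] L := by
  rw [sublist_flatten_iff_sublistForall₂]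
  constructor
  · rintro ⟨cs, hcs, hne, hfl⟩
    rcases eq_of_flatten_eq_triple hne hfl with rfl | rfl | rfl | rfl <;> simp [hcs]
  · rintro (h | h | h | h) <;> exact ⟨_, h, by simp, rfl⟩

theorem sublistForall₂_map_reverse_iff {L : List (List α)} :
    SublistForall₂ Sublist cs (L.map reverse) ↔ SublistForall₂ Sublist (cs.map reverse) L := by
  simp [sublist_reverse_iff]

end List

theorem orderIsoList_triple_iff {a b c p q r : ℕ} :
    OrderIsoList [a, b, c] [p, q, r] ↔ (a < b ↔ p < q) ∧ (b < a ↔ q < p) ∧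
      (a < c ↔ p < r) ∧ (c < a ↔ r < p) ∧ (b < c ↔ q < r) ∧ (c < b ↔ r < q) := by
  constructor
  · rintro ⟨-, h⟩
    exact ⟨h 0 1 (by simp) (by simp), h 1 0 (by simp) (by simp), h 0 2 (by simp) (by simp),
      h 2 0 (by simp) (by simp), h 1 2 (by simp) (by simp), h 2 1 (by simp) (by simp)⟩
  · intro h
    refine ⟨rfl, fun i j hi hj => ?_⟩
    simp only [length_cons, length_nil] at hi hj
    interval_cases i <;> interval_cases j <;> simp_all

theorem containsPat_231_iff {w : List ℕ} :
    ContainsPat w [2, 3, 1] ↔ ∃ x y z, z < x ∧ x < y ∧ [x, y, z] <+ w := by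
  constructor
  · rintro ⟨s, hs, hiso⟩
    obtain ⟨x, y, z, rfl⟩ := length_eq_three.1 hiso.1
    rw [orderIsoList_triple_iff] at hiso
    exact ⟨x, y, z, by omega, by omega, hs⟩
  · rintro ⟨x, y, z, hzx, hxy, hs⟩
    exact ⟨_, hs, orderIsoList_triple_iff.2 (by omega)⟩

theorem dividedContains_iff {bs qs : List (List ℕ)} :
    DividedContains bs qs ↔ ∃ cs, SublistForall₂ Sublist cs bs ∧
      Forall₂ (fun c q => c.length = q.length) cs qs ∧ OrderIsoList cs.flatten qs.flatten := by
  constructor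
  · rintro ⟨g, hg, ch, hsub, hlen, hiso⟩
    refine ⟨ofFn ch, sublistForall₂_iff.2 ⟨(ofFn g).map (bs[·]), ?_, ?_⟩, ?_, hiso⟩
    · rw [forall₂_iff_get]
      simpa using fun i hi => hsub ⟨i, hi⟩
    · exact map_getElem_sublist (pairwise_ofFn.2 fun _ _ h => hg h)
    · rw [forall₂_iff_get]
      simpa using fun i hi => hlen ⟨i, hi⟩
  · rintro ⟨cs, hsub, hlen, hiso⟩
    obtain ⟨ds, hcd, hds⟩ := sublistForall₂_iff.1 hsub
    obtain ⟨f, hf⟩ := sublist_iff_exists_fin_orderEmbedding_get_eq.1 hds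
    have hqc : qs.length = cs.length := hlen.length_eq.symm
    have hcd' : cs.length = ds.length := hcd.length_eq
    refine ⟨fun i => f (Fin.cast (hqc.trans hcd') i), fun i j hij => f.strictMono hij,
      fun i => cs.get (Fin.cast hqc i), fun i => ?_, fun i => ?_, ?_⟩
    · rw [← hf]
      exact hcd.get _ _
    · exact hlen.get _ _
    · convert hiso
      exact ext_getElem (by simp [hqc]) (by simp)

theorem containsPat_231_flatten_map_reverse_iff {bs : List (List ℕ)} :
    ContainsPat (bs.map reverse).flatten [2, 3, 1] ↔ ∃ x y z, z < x ∧ x < y ∧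
      (SublistForall₂ Sublist [[z, y, x]] bs ∨ SublistForall₂ Sublist [[x], [z, y]] bs ∨
        SublistForall₂ Sublist [[y, x], [z]] bs ∨ SublistForall₂ Sublist [[x], [y], [z]] bs) := by
  simp only [containsPat_231_iff, triple_sublist_flatten_iff, sublistForall₂_map_reverse_iff,
    map_cons, map_nil, reverse_cons, reverse_nil, nil_append, cons_append]

section DividedPatterns

variable {bs : List (List ℕ)}

theorem dividedContains_132_iff :
    DividedContains bs [[1, 3, 2]] ↔
      ∃ x y z, z < x ∧ x < y ∧ SublistForall₂ Sublist [[z, y, x]] bs := by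
  rw [dividedContains_iff]
  constructor
  · rintro ⟨_, hs, _ | ⟨hlen, _ | _⟩, hiso⟩
    obtain ⟨a, b, c, rfl⟩ := length_eq_three.1 hlen
    have := orderIsoList_triple_iff.1 hiso
    exact ⟨c, b, a, by omega, by omega, hs⟩
  · rintro ⟨x, y, z, hzx, hxy, hs⟩
    exact ⟨_, hs, by simp, orderIsoList_triple_iff.2 (by omega)⟩

theorem dividedContains_2_13_iff :
    DividedContains bs [[2], [1, 3]] ↔
      ∃ x y z, z < x ∧ x < y ∧ SublistForall₂ Sublist [[x], [z, y]] bs := by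
  rw [dividedContains_iff]
  constructor
  · rintro ⟨_, hs, _ | ⟨hlen₁, _ | ⟨hlen₂, _ | _⟩⟩, hiso⟩
    obtain ⟨a, rfl⟩ := length_eq_one_iff.1 hlen₁
    obtain ⟨b, c, rfl⟩ := length_eq_two.1 hlen₂
    have := orderIsoList_triple_iff.1 hiso
    exact ⟨a, c, b, by omega, by omega, hs⟩
  · rintro ⟨x, y, z, hzx, hxy, hs⟩
    exact ⟨_, hs, by simp, orderIsoList_triple_iff.2 (by omega)⟩

theorem dividedContains_32_1_iff :
    DividedContains bs [[3, 2], [1]] ↔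
      ∃ x y z, z < x ∧ x < y ∧ SublistForall₂ Sublist [[y, x], [z]] bs := by
  rw [dividedContains_iff]
  constructor
  · rintro ⟨_, hs, _ | ⟨hlen₁, _ | ⟨hlen₂, _ | _⟩⟩, hiso⟩
    obtain ⟨a, b, rfl⟩ := length_eq_two.1 hlen₁
    obtain ⟨c, rfl⟩ := length_eq_one_iff.1 hlen₂
    have := orderIsoList_triple_iff.1 hiso
    exact ⟨b, a, c, by omega, by omega, hs⟩
  · rintro ⟨x, y, z, hzx, hxy, hs⟩
    exact ⟨_, hs, by simp, orderIsoList_triple_iff.2 (by omega)⟩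

theorem dividedContains_2_3_1_iff :
    DividedContains bs [[2], [3], [1]] ↔
      ∃ x y z, z < x ∧ x < y ∧ SublistForall₂ Sublist [[x], [y], [z]] bs := by
  rw [dividedContains_iff]
  constructor
  · rintro ⟨_, hs, _ | ⟨hlen₁, _ | ⟨hlen₂, _ | ⟨hlen₃, _ | _⟩⟩⟩, hiso⟩
    obtain ⟨a, rfl⟩ := length_eq_one_iff.1 hlen₁
    obtain ⟨b, rfl⟩ := length_eq_one_iff.1 hlen₂
    obtain ⟨c, rfl⟩ := length_eq_one_iff.1 hlen₃
    have := orderIsoList_triple_iff.1 hiso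
    exact ⟨a, b, c, by omega, by omega, hs⟩
  · rintro ⟨x, y, z, hzx, hxy, hs⟩
    exact ⟨_, hs, by simp, orderIsoList_triple_iff.2 (by omega)⟩

end DividedPatterns

theorem stmt16 (p : List ℕ) (bs : List (List ℕ)) (h : IsDivision p bs) :
    Relation.ReflTransGen PQSStep (p, [], [], [], [])
        ([], [], (bs.map List.reverse).flatten, [], []) ∧
      (AvoidsPat (bs.map List.reverse).flatten [2, 3, 1] ↔
        (¬ DividedContains bs [[1, 3, 2]] ∧ ¬ DividedContains bs [[2], [1, 3]] ∧
          ¬ DividedContains bs [[3, 2], [1]] ∧ ¬ DividedContains bs [[2], [3], [1]])) := by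
  obtain ⟨rfl, -⟩ := h
  refine ⟨by simpa using PQSStep.reflTransGen_flatten bs [] [] [], ?_⟩
  rw [AvoidsPat, containsPat_231_flatten_map_reverse_iff, dividedContains_132_iff,
    dividedContains_2_13_iff, dividedContains_32_1_iff, dividedContains_2_3_1_iff]
  simp only [and_or_left, exists_or, not_or]
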